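/- Second moment cross-term formula: In the homogeneous binary MAG model M(n;L), for any two distinct nodes u, v ∈ {1,…,n}, the probability that both u and v are isolated equals E[(1 − Q_L(A(u),A(v))) · (1 − Q̃_L(A(u),A(v)))^{n−2}], where for a,b ∈ {0,1}^L one sets Q_L(a,b) = ∏_{ℓ=1}^L q(a_ℓ,b_ℓ), Q*_L(a) = E[Q_L(a, A)], Q**_L(a,b) = E[Q_L(a, A) Q_L(b, A)] with A a random vector of L i.i.d. Bernoulli(μ(1)) bits, and Q̃_L(a,b) = Q*_L(a) + Q*_L(b) − Q**_L(a,b). -/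

import Mathlib

open MeasureTheory Filter

/-- Bernoulli measure on `Bool` with parameter `p` = probability of `true`. -/
noncomputable def bern (p : ℝ) : Measure Bool :=
  (Real.toNNReal p) • Measure.dirac true + (Real.toNNReal (1 - p)) • Measure.dirac false

/-- Uniform distribution on `[0,1]`. -/
noncomputable def unif01 : Measure ℝ := MeasureTheory.volume.restrict (Set.Icc (0:ℝ) 1)

/-- The probability space of the homogeneous binary MAG model `M(n;L)`:
i.i.d. Bernoulli attribute bits and, independently, i.i.d. Uniform(0,1) variables. -/
noncomputable def magMeasure (n L : ℕ) (p : ℝ) :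
    Measure ((Fin n → Fin L → Bool) × (Fin n × Fin n → ℝ)) :=
  (Measure.pi fun _ : Fin n => Measure.pi fun _ : Fin L => bern p).prod
    (Measure.pi fun _ : Fin n × Fin n => unif01)

/-- `Q_L(a,b) = ∏_{ℓ} q(a_ℓ, b_ℓ)`. -/
def QL {L : ℕ} (q : Bool → Bool → ℝ) (a b : Fin L → Bool) : ℝ :=
  ∏ ℓ : Fin L, q (a ℓ) (b ℓ)

/-- Distinct nodes `u, v` are adjacent iff `U(u,v) ≤ Q_L(A(u),A(v))`, where the uniform
variable attached to the unordered pair `{u,v}` is the one indexed by `(min u v, max u v)`. -/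
def Adj {n L : ℕ} (q : Bool → Bool → ℝ)
    (ω : (Fin n → Fin L → Bool) × (Fin n × Fin n → ℝ)) (u v : Fin n) : Prop :=
  u ≠ v ∧ ω.2 (min u v, max u v) ≤ QL q (ω.1 u) (ω.1 v)

/-- Node `u` is isolated if it is adjacent to no other node. -/
def Isolated {n L : ℕ} (q : Bool → Bool → ℝ)
    (ω : (Fin n → Fin L → Bool) × (Fin n × Fin n → ℝ)) (u : Fin n) : Prop :=
  ∀ v, ¬ Adj q ω u v

/-- `S_L(u)`: the number of attributes exhibited by node `u`. -/
def Scount {n L : ℕ} (ω : (Fin n → Fin L → Bool) × (Fin n × Fin n → ℝ)) (u : Fin n) : ℕ :=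
  (Finset.univ.filter fun ℓ : Fin L => ω.1 u ℓ = true).card

open scoped Classical in
/-- `I_n(L)`: the number of isolated nodes. -/
noncomputable def numIsolated {n L : ℕ} (q : Bool → Bool → ℝ)
    (ω : (Fin n → Fin L → Bool) × (Fin n × Fin n → ℝ)) : ℕ :=
  (Finset.univ.filter fun u : Fin n => Isolated q ω u).card

open scoped Classical in
/-- `I_n^{(k)}(L)`: the number of isolated nodes `u` with `S_L(u) = k`. -/
noncomputable def numIsolatedWith {n L : ℕ} (q : Bool → Bool → ℝ) (k : ℕ)
    (ω : (Fin n → Fin L → Bool) × (Fin n × Fin n → ℝ)) : ℕ :=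
  (Finset.univ.filter fun u : Fin n => Isolated q ω u ∧ Scount ω u = k).card

open scoped Classical in
/-- `ξ^{(k)}(u)`: the indicator that node `u` is isolated and `S_L(u) = k`. -/
noncomputable def xiInd {n L : ℕ} (q : Bool → Bool → ℝ) (k : ℕ)
    (ω : (Fin n → Fin L → Bool) × (Fin n × Fin n → ℝ)) (u : Fin n) : ℝ :=
  if Isolated q ω u ∧ Scount ω u = k then 1 else 0

/-- `Γ(a) = μ(0) q(a,0) + μ(1) q(a,1)`, with `μ(1) = μ1`, `μ(0) = 1 - μ1`. -/
def Gam (μ1 : ℝ) (q : Bool → Bool → ℝ) (a : Bool) : ℝ :=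
  (1 - μ1) * q a false + μ1 * q a true

/-- A scaling `L : ℕ → ℕ` is `ρ`-admissible if `L_n ~ ρ ln n` as `n → ∞`. -/
def Admissible (ρ : ℝ) (L : ℕ → ℕ) : Prop :=
  Asymptotics.IsEquivalent Filter.atTop (fun n => (L n : ℝ)) (fun n => ρ * Real.log n)

/-- `G(ν,μ) = (μ/ν)^ν ((1-μ)/(1-ν))^{1-ν}` (real powers; the conventions at `ν = 0,1`
agree with the continuous extension). -/
noncomputable def Gfun (ν μ : ℝ) : ℝ :=
  (μ / ν) ^ ν * ((1 - μ) / (1 - ν)) ^ (1 - ν)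

/-- `Q*_L(a) = E[Q_L(a,A)]`, `A` a vector of `L` i.i.d. Bernoulli(μ1) bits. -/
noncomputable def Qstar {L : ℕ} (μ1 : ℝ) (q : Bool → Bool → ℝ) (a : Fin L → Bool) : ℝ :=
  ∫ b, QL q a b ∂(Measure.pi fun _ : Fin L => bern μ1)

/-- `Q**_L(a,b) = E[Q_L(a,A) Q_L(b,A)]`. -/
noncomputable def Qstarstar {L : ℕ} (μ1 : ℝ) (q : Bool → Bool → ℝ) (a b : Fin L → Bool) : ℝ :=
  ∫ c, QL q a c * QL q b c ∂(Measure.pi fun _ : Fin L => bern μ1)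

/-- `Q̃_L(a,b) = Q*_L(a) + Q*_L(b) − Q**_L(a,b)`. -/
noncomputable def Qtilde {L : ℕ} (μ1 : ℝ) (q : Bool → Bool → ℝ) (a b : Fin L → Bool) : ℝ :=
  Qstar μ1 q a + Qstar μ1 q b - Qstarstar μ1 q a b

/-! Given the attributes, the uniforms attached to the pairs meeting `u` or `v` are independent,
so both nodes are isolated with probability
`(1 - Q(A u, A v)) ∏_{w ≠ u, v} (1 - Q(A u, A w)) (1 - Q(A v, A w))`.
The attributes `A w`, `w ≠ u, v`, are i.i.d. and independent of `A u, A v`, so averaging over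
them turns the product into the `(n - 2)`-th power of
`E[(1 - Q(a, A)) (1 - Q(b, A))] = 1 - Q̃(a, b)`. -/

open Finset

lemma isProbabilityMeasure_bern {p : ℝ} (h0 : 0 ≤ p) (h1 : p ≤ 1) :
    IsProbabilityMeasure (bern p) := by
  constructor
  simp [bern, ← ENNReal.coe_add, ← Real.toNNReal_add h0 (sub_nonneg.2 h1)]

instance : IsProbabilityMeasure unif01 :=
  ⟨by simp [unif01]⟩

lemma unif01_Ioi {t : ℝ} (ht : 0 ≤ t) : unif01 (Set.Ioi t) = ENNReal.ofReal (1 - t) := by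
  rw [unif01, Measure.restrict_apply' measurableSet_Icc, ← Set.Ici_inter_Iic, ← Set.inter_assoc,
    Set.inter_eq_left.2 (Set.Ioi_subset_Ici ht), Set.Ioi_inter_Iic, Real.volume_Ioc]

section PairIndex

variable {α : Type*} [LinearOrder α]

def pairIndex (x y : α) : α × α := (min x y, max x y)

lemma pairIndex_comm (x y : α) : pairIndex x y = pairIndex y x := by
  simp [pairIndex, min_comm, max_comm]

lemma pairIndex_eq_pairIndex_iff {x y z w : α} :
    pairIndex x y = pairIndex z w ↔ s(x, y) = s(z, w) := by
  simp [pairIndex, ← Sym2.inf_eq_inf_and_sup_eq_sup]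

lemma apply_pairIndex_of_comm {β : Type*} {f : α → α → β} (hf : ∀ x y, f x y = f y x)
    (x y : α) : f (pairIndex x y).1 (pairIndex x y).2 = f x y := by
  rcases le_total x y with h | h
  · simp [pairIndex, h]
  · simp [pairIndex, h, hf x y]

variable [Fintype α] [DecidableEq α]

def incidentPairs (u v : α) : Finset (α × α) :=
  insert (pairIndex u v)
    (({u, v}ᶜ : Finset α).image (pairIndex u) ∪ ({u, v}ᶜ : Finset α).image (pairIndex v))

lemma prod_incidentPairs {M : Type*} [CommMonoid M] {u v : α} (huv : u ≠ v) (f : α × α → M) :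
    ∏ i ∈ incidentPairs u v, f i
      = f (pairIndex u v) * ∏ w ∈ ({u, v}ᶜ : Finset α), f (pairIndex u w) * f (pairIndex v w) := by
  have hinj : ∀ z ∈ ({u, v} : Finset α), Set.InjOn (pairIndex z) ↑({u, v}ᶜ : Finset α) := by
    intro z hz w hw w' hw' h
    simp only [mem_insert, mem_singleton, coe_compl, coe_insert, coe_singleton, Set.mem_compl_iff,
      Set.mem_insert_iff, Set.mem_singleton_iff, pairIndex_eq_pairIndex_iff, Sym2.eq_iff] at *
    grind
  rw [incidentPairs, prod_insert, prod_union, prod_image (hinj u (by simp)),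
    prod_image (hinj v (by simp)), prod_mul_distrib]
  · rw [disjoint_left]
    intro i hu hv
    obtain ⟨w, hw, rfl⟩ := mem_image.1 hu
    obtain ⟨w', hw', h⟩ := mem_image.1 hv
    simp only [mem_compl, mem_insert, mem_singleton, pairIndex_eq_pairIndex_iff,
      Sym2.eq_iff] at hw hw' h
    grind
  · simp only [mem_union, mem_image, mem_compl, mem_insert, mem_singleton,
      pairIndex_eq_pairIndex_iff, Sym2.eq_iff]
    grind

end PairIndex

lemma sum_pi_mul_prod_compl_pair {ι E R : Type*} [Fintype ι] [DecidableEq ι] [Fintype E]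
    [DecidableEq E] [CommSemiring R] {u v : ι} (huv : u ≠ v)
    (m : E → R) (F : E → E → R) (G : E → E → E → R) :
    ∑ a : ι → E, (∏ w, m (a w)) * (F (a u) (a v) * ∏ w ∈ {u, v}ᶜ, G (a u) (a v) (a w))
      = ∑ b, ∑ c, m b * m c * (F b c * (∑ e, m e * G b c e) ^ (Fintype.card ι - 2)) := by
  -- `∏ w, ψ b c w (a w)` is the summand restricted to the fibre `a u = b, a v = c`, and it
  -- factors over the coordinates, so its sum over `a` is a product of one-coordinate sums.
  let ψ : E → E → ι → E → R := fun b c w e =>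
    if w = u then (if e = b then m e else 0)
    else if w = v then (if e = c then m e else 0) else m e * G b c e
  have hψ_off : ∀ b c, ∀ w ∈ ({u, v}ᶜ : Finset ι), ∀ e, ψ b c w e = m e * G b c e := by
    intro b c w hw e
    simp only [mem_compl, mem_insert, mem_singleton, not_or] at hw
    simp [ψ, hw.1, hw.2]
  have hψ_prod : ∀ b c (a : ι → E), ∏ w, ψ b c w (a w)
      = (if a u = b ∧ a v = c then 1 else 0) *
          ((∏ w, m (a w)) * ∏ w ∈ {u, v}ᶜ, G b c (a w)) := by
    intro b c a
    simp_rw [← prod_compl_mul_prod {u, v}, prod_pair huv,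
      prod_congr rfl fun w hw => hψ_off b c w hw (a w), prod_mul_distrib]
    by_cases hb : a u = b <;> by_cases hc : a v = c <;>
      simp [ψ, hb, hc, huv.symm, mul_assoc, mul_comm, mul_left_comm]
  have hψ_sum : ∀ b c, ∑ a : ι → E, ∏ w, ψ b c w (a w)
      = m b * m c * (∑ e, m e * G b c e) ^ (Fintype.card ι - 2) := by
    intro b c
    rw [← Fintype.prod_sum, ← prod_compl_mul_prod {u, v}, prod_pair huv,
      prod_congr rfl fun w hw => sum_congr rfl fun e _ => hψ_off b c w hw e, prod_const,
      card_compl, card_pair huv]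
    simp [ψ, huv.symm, mul_comm]
  calc _ = ∑ a : ι → E, ∑ b, ∑ c, F b c * ∏ w, ψ b c w (a w) := by
        refine sum_congr rfl fun a _ => ?_
        simp only [hψ_prod, ite_and, ite_mul, one_mul, zero_mul, mul_ite, mul_zero, sum_ite_irrel,
          sum_ite_eq, mem_univ, ↓reduceIte, sum_const_zero]
        ring
    _ = _ := by
        rw [sum_comm]
        refine sum_congr rfl fun b _ => ?_
        rw [sum_comm]
        refine sum_congr rfl fun c _ => ?_
        rw [← mul_sum, hψ_sum]
        ring

lemma integral_pi_mul_prod_compl_pair {ι E : Type*} [Fintype ι] [DecidableEq ι] [Fintype E]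
    [MeasurableSpace E] [MeasurableSingletonClass E] (ν : Measure E) [IsProbabilityMeasure ν]
    {u v : ι} (huv : u ≠ v) (F : E → E → ℝ) (G : E → E → E → ℝ) :
    ∫ a, F (a u) (a v) * ∏ w ∈ {u, v}ᶜ, G (a u) (a v) (a w) ∂(Measure.pi fun _ => ν)
      = ∫ a, F (a u) (a v) * (∫ e, G (a u) (a v) e ∂ν) ^ (Fintype.card ι - 2)
          ∂(Measure.pi fun _ => ν) := by
  classical
  have hsum_one : ∑ e, ν.real {e} = 1 := by simp
  simp_rw [integral_fintype Integrable.of_finite, smul_eq_mul, measureReal_def,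
    Measure.pi_singleton, ENNReal.toReal_prod, ← measureReal_def]
  have h := sum_pi_mul_prod_compl_pair huv (fun e => ν.real {e})
    (fun b c => F b c * (∑ e, ν.real {e} * G b c e) ^ (Fintype.card ι - 2)) fun _ _ _ => 1
  simp only [prod_const_one, mul_one, hsum_one, one_pow] at h
  rw [sum_pi_mul_prod_compl_pair huv (fun e => ν.real {e}) F G, h]

section Model

variable {n L : ℕ} {q : Bool → Bool → ℝ}

lemma QL_comm (hq : ∀ a b, q a b = q b a) (a b : Fin L → Bool) : QL q a b = QL q b a :=
  prod_congr rfl fun _ _ => hq _ _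

lemma QL_pairIndex (hq : ∀ a b, q a b = q b a) (a : Fin n → Fin L → Bool) (x y : Fin n) :
    QL q (a (pairIndex x y).1) (a (pairIndex x y).2) = QL q (a x) (a y) :=
  apply_pairIndex_of_comm (f := fun x y => QL q (a x) (a y)) (fun _ _ => QL_comm hq _ _) x y

lemma QL_nonneg (hq : ∀ a b, 0 ≤ q a b) (a b : Fin L → Bool) : 0 ≤ QL q a b :=
  prod_nonneg fun _ _ => hq _ _

lemma one_sub_QL_nonneg (hq₀ : ∀ a b, 0 ≤ q a b) (hq₁ : ∀ a b, q a b ≤ 1) (a b : Fin L → Bool) :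
    0 ≤ 1 - QL q a b :=
  sub_nonneg.2 <| prod_le_one (fun _ _ => hq₀ _ _) fun _ _ => hq₁ _ _

lemma measurableSet_isolated (u : Fin n) :
    MeasurableSet {ω : (Fin n → Fin L → Bool) × (Fin n × Fin n → ℝ) | Isolated q ω u} := by
  simp only [Isolated, Adj, Set.ofPred_forall]
  measurability

lemma isolated_iff (ω : (Fin n → Fin L → Bool) × (Fin n × Fin n → ℝ)) (u : Fin n) :
    Isolated q ω u ↔ ∀ w ≠ u, QL q (ω.1 u) (ω.1 w) < ω.2 (pairIndex u w) := by
  simp only [Isolated, Adj, pairIndex, not_and, not_le]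
  exact forall_congr' fun w => ⟨fun h hw => h (Ne.symm hw), fun h hw => h (Ne.symm hw)⟩

lemma setOf_isolated_pair_eq_pi (hq : ∀ a b, q a b = q b a) {u v : Fin n} (huv : u ≠ v)
    (a : Fin n → Fin L → Bool) :
    {x | Isolated q (a, x) u ∧ Isolated q (a, x) v}
      = (incidentPairs u v : Set (Fin n × Fin n)).pi fun i => Set.Ioi (QL q (a i.1) (a i.2)) := by
  ext x
  simp only [Set.mem_ofPred_eq, isolated_iff, Set.mem_pi, mem_coe, incidentPairs, Set.mem_Ioi,
    forall_mem_insert, forall_mem_union, forall_mem_image, QL_pairIndex hq]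
  simp only [mem_compl, mem_insert, mem_singleton, not_or]
  have hvu : QL q (a v) (a u) < x (pairIndex v u) ↔ QL q (a u) (a v) < x (pairIndex u v) := by
    rw [pairIndex_comm, QL_comm hq]
  constructor
  · rintro ⟨hu, hv⟩
    exact ⟨hu v huv.symm, fun w hw => hu w hw.1, fun w hw => hv w hw.2⟩
  · rintro ⟨h, hu, hv⟩
    refine ⟨fun w hwu => ?_, fun w hwv => ?_⟩
    · by_cases hwv : w = v
      · exact hwv ▸ h
      · exact hu ⟨hwu, hwv⟩
    · by_cases hwu : w = u
      · exact hwu ▸ hvu.2 h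
      · exact hv ⟨hwu, hwv⟩

lemma pi_unif01_setOf_isolated_pair (hq₀ : ∀ a b, 0 ≤ q a b) (hq₁ : ∀ a b, q a b ≤ 1)
    (hq : ∀ a b, q a b = q b a) {u v : Fin n} (huv : u ≠ v) (a : Fin n → Fin L → Bool) :
    Measure.pi (fun _ => unif01) {x | Isolated q (a, x) u ∧ Isolated q (a, x) v}
      = ENNReal.ofReal ((1 - QL q (a u) (a v)) *
          ∏ w ∈ ({u, v}ᶜ : Finset (Fin n)), (1 - QL q (a u) (a w)) * (1 - QL q (a v) (a w))) := by
  have h1Q := one_sub_QL_nonneg (L := L) hq₀ hq₁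
  have hU : ∀ b c : Fin L → Bool, unif01 (Set.Ioi (QL q b c)) = ENNReal.ofReal (1 - QL q b c) :=
    fun b c => unif01_Ioi (QL_nonneg hq₀ b c)
  rw [setOf_isolated_pair_eq_pi hq huv, Measure.pi_pi_finset, prod_incidentPairs huv]
  simp only [QL_pairIndex hq, hU, ← ENNReal.ofReal_mul (h1Q _ _)]
  rw [← ENNReal.ofReal_prod_of_nonneg fun w _ => mul_nonneg (h1Q _ _) (h1Q _ _),
    ← ENNReal.ofReal_mul (h1Q _ _)]

lemma one_sub_Qtilde_eq_integral (μ1 : ℝ) [IsProbabilityMeasure (bern μ1)] (q : Bool → Bool → ℝ)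
    (a b : Fin L → Bool) :
    1 - Qtilde μ1 q a b = ∫ c, (1 - QL q a c) * (1 - QL q b c) ∂(Measure.pi fun _ => bern μ1) := by
  simp_rw [one_sub_mul, mul_one_sub]
  rw [integral_sub .of_finite .of_finite, integral_sub .of_finite .of_finite,
    integral_sub .of_finite .of_finite]
  simp only [Qtilde, Qstar, Qstarstar, integral_const, probReal_univ, smul_eq_mul, mul_one]
  ring

end Model

theorem mag_second_moment_cross_term_general
    (n L : ℕ)
    (μ1 : ℝ) (hμ1 : 0 < μ1) (hμ1' : μ1 < 1)
    (q : Bool → Bool → ℝ) (hq : ∀ a b, 0 < q a b ∧ q a b < 1)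
    (hqsym : q false true = q true false)
    (u v : Fin n) (huv : u ≠ v) :
    magMeasure n L μ1 {ω | Isolated q ω u ∧ Isolated q ω v}
      = ENNReal.ofReal
          (∫ ω, (1 - QL q (ω.1 u) (ω.1 v)) *
              (1 - Qtilde μ1 q (ω.1 u) (ω.1 v)) ^ (n - 2)
            ∂(magMeasure n L μ1)) := by
  have := isProbabilityMeasure_bern hμ1.le hμ1'.le
  have hq_comm : ∀ a b, q a b = q b a := by
    intro a b; cases a <;> cases b <;> simp [hqsym]
  have hq₀ : ∀ a b, 0 ≤ q a b := fun a b => (hq a b).1.le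
  have hq₁ : ∀ a b, q a b ≤ 1 := fun a b => (hq a b).2.le
  have hmeas : MeasurableSet
      {ω : (Fin n → Fin L → Bool) × (Fin n × Fin n → ℝ) | Isolated q ω u ∧ Isolated q ω v} :=
    (measurableSet_isolated u).inter (measurableSet_isolated v)
  rw [magMeasure, Measure.prod_apply hmeas,
    integral_fun_fst fun a : Fin n → Fin L → Bool =>
      (1 - QL q (a u) (a v)) * (1 - Qtilde μ1 q (a u) (a v)) ^ (n - 2),
    probReal_univ, one_smul]
  simp_rw [Set.preimage_ofPred_eq, pi_unif01_setOf_isolated_pair hq₀ hq₁ hq_comm huv]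
  rw [← ofReal_integral_eq_lintegral_ofReal .of_finite (ae_of_all _ fun a => ?_),
    integral_pi_mul_prod_compl_pair _ huv (fun b c => 1 - QL q b c)
      fun b c e => (1 - QL q b e) * (1 - QL q c e), Fintype.card_fin]
  · simp_rw [one_sub_Qtilde_eq_integral]
  · have h1Q := one_sub_QL_nonneg (L := L) hq₀ hq₁
    exact mul_nonneg (h1Q _ _) (prod_nonneg fun w _ => mul_nonneg (h1Q _ _) (h1Q _ _))

theorem mag_second_moment_cross_term
    (n L : ℕ) (hn : 2 ≤ n) (hL : 1 ≤ L)
    (μ1 : ℝ) (hμ1 : 0 < μ1) (hμ1' : μ1 < 1)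
    (q : Bool → Bool → ℝ) (hq : ∀ a b, 0 < q a b ∧ q a b < 1)
    (hqsym : q false true = q true false)
    (u v : Fin n) (huv : u ≠ v) :
    magMeasure n L μ1 {ω | Isolated q ω u ∧ Isolated q ω v}
      = ENNReal.ofReal
          (∫ ω, (1 - QL q (ω.1 u) (ω.1 v)) *
              (1 - Qtilde μ1 q (ω.1 u) (ω.1 v)) ^ (n - 2)
            ∂(magMeasure n L μ1)) :=
  mag_second_moment_cross_term_general n L μ1 hμ1 hμ1' q hq hqsym u v huv
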